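/- In Max M₂(ℂ) (where M₂(ℂ) is the C*-algebra of 2×2 complex matrices), let P be the subspace of symmetric matrices {(a b; b c) : a, b, c ∈ ℂ}, R the subspace {(a b; 0 0) : a, b ∈ ℂ}, and L the subspace {(a 0; b 0) : a, b ∈ ℂ}. Then R∘⊤∘L = {(a 0; 0 0) : a ∈ ℂ} ≤ P while R ≰ P and L ≰ P, so P is not prime, although P is a maximal proper linear subspace of M₂(ℂ). Consequently P is not a meet of prime elements, and hence Max M₂(ℂ) is not spatial with respect to irreducible representations. -/

import Mathlib

/-!
The symmetric matrices are the kernel of the nonzero functional `m ↦ m 0 1 - m 1 0`, hence a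
coatom of the lattice of subspaces. Since `R∘⊤∘L = R * L` is spanned by the symmetric matrix
`(1 0; 0 0)`, while `R` and `L` contain the non-symmetric matrices `(0 1; 0 0)` and `(0 0; 1 0)`,
this coatom is not prime. A non-prime coatom lies below no prime except `⊤`, so the meet of the
primes above it is `⊤`, not the coatom itself.
-/

abbrev M2C := Matrix (Fin 2) (Fin 2) ℂ

/-- The quantale multiplication of `Max M₂(ℂ)`: `M∘N` is the closure of the linear span of
the products (all subspaces of `M₂(ℂ)` are closed). -/
noncomputable def qmul (M N : Submodule ℂ M2C) : Submodule ℂ M2C :=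
  (M * N).topologicalClosure

/-- A prime element of the quantale `Max M₂(ℂ)`: `M∘⊤∘N ≤ P` implies `M ≤ P` or `N ≤ P`. -/
def IsPrimeEl (P : Submodule ℂ M2C) : Prop :=
  ∀ M N : Submodule ℂ M2C, IsClosed (M : Set M2C) → IsClosed (N : Set M2C) →
    qmul (qmul M ⊤) N ≤ P → M ≤ P ∨ N ≤ P

/-- The subspace of symmetric matrices `(a b; b c)`. -/
noncomputable def symmSub : Submodule ℂ M2C where
  carrier := {m | m 0 1 = m 1 0}
  add_mem' := by
    intro a b ha hb
    simp only [Set.mem_setOf_eq, Matrix.add_apply] at *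
    rw [ha, hb]
  zero_mem' := rfl
  smul_mem' := by
    intro c m hm
    simp only [Set.mem_setOf_eq, Matrix.smul_apply] at *
    rw [hm]

/-- The subspace `{(a b; 0 0)}` of matrices with zero second row. -/
noncomputable def rowSub : Submodule ℂ M2C where
  carrier := {m | m 1 0 = 0 ∧ m 1 1 = 0}
  add_mem' := by
    intro a b ha hb
    simp only [Set.mem_setOf_eq, Matrix.add_apply] at *
    rw [ha.1, ha.2, hb.1, hb.2]
    simp
  zero_mem' := ⟨rfl, rfl⟩
  smul_mem' := by
    intro c m hm
    simp only [Set.mem_setOf_eq, Matrix.smul_apply] at *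
    rw [hm.1, hm.2]
    simp
  
/-- The subspace `{(a 0; b 0)}` of matrices with zero second column. -/
noncomputable def colSub : Submodule ℂ M2C where
  carrier := {m | m 0 1 = 0 ∧ m 1 1 = 0}
  add_mem' := by
    intro a b ha hb
    simp only [Set.mem_setOf_eq, Matrix.add_apply] at *
    rw [ha.1, ha.2, hb.1, hb.2]
    simp
  zero_mem' := ⟨rfl, rfl⟩
  smul_mem' := by
    intro c m hm
    simp only [Set.mem_setOf_eq, Matrix.smul_apply] at *
    rw [hm.1, hm.2]
    simp

theorem IsCoatom.sInf_eq_top {α : Type*} [CompleteLattice α] {a : α} {s : Set α}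
    (ha : IsCoatom a) (has : a ∉ s) (hs : ∀ b ∈ s, a ≤ b) : sInf s = ⊤ :=
  _root_.sInf_eq_top.2 fun b hb ↦
    (ha.le_iff.1 (hs b hb)).resolve_right (by rintro rfl; exact has hb)

theorem Matrix.isCoatom_ker_entryLinearMap_sub {n K : Type*} [Field K] [DecidableEq n] {i j : n}
    (hij : i ≠ j) :
    IsCoatom (LinearMap.ker (entryLinearMap K K i j - entryLinearMap K K j i)) :=
  LinearMap.isCoatom_ker_of_surjective fun c ↦
    ⟨single i j c, by simp [single_apply_of_ne, hij, hij.symm]⟩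

lemma mem_symmSub {m : M2C} : m ∈ symmSub ↔ m 0 1 = m 1 0 := Iff.rfl

lemma mem_rowSub {m : M2C} : m ∈ rowSub ↔ m 1 0 = 0 ∧ m 1 1 = 0 := Iff.rfl

lemma mem_colSub {m : M2C} : m ∈ colSub ↔ m 0 1 = 0 ∧ m 1 1 = 0 := Iff.rfl

lemma symmSub_eq_ker :
    symmSub =
      LinearMap.ker (Matrix.entryLinearMap ℂ ℂ (0 : Fin 2) 1 - Matrix.entryLinearMap ℂ ℂ 1 0) := by
  ext m
  simp [mem_symmSub, sub_eq_zero]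

lemma isCoatom_symmSub : IsCoatom symmSub :=
  symmSub_eq_ker ▸ Matrix.isCoatom_ker_entryLinearMap_sub (by decide)

lemma qmul_eq_mul (M N : Submodule ℂ M2C) : qmul M N = M * N :=
  (M * N).closed_of_finiteDimensional.submodule_topologicalClosure_eq

lemma rowSub_mul_top : rowSub * ⊤ = rowSub := by
  refine le_antisymm (Submodule.mul_le.2 fun a ha b _ ↦ ?_) ?_
  · rw [mem_rowSub] at ha ⊢
    simp [Matrix.mul_apply, Fin.sum_univ_two, ha.1, ha.2]
  · calc rowSub = rowSub * 1 := (mul_one _).symm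
      _ ≤ rowSub * ⊤ := mul_le_mul' le_rfl le_top

lemma mul_eq_smul_of_mem_rowSub_of_mem_colSub {a b : M2C} (ha : a ∈ rowSub) (hb : b ∈ colSub) :
    a * b = (a 0 0 * b 0 0 + a 0 1 * b 1 0) • !![1, 0; 0, 0] := by
  rw [mem_rowSub] at ha
  rw [mem_colSub] at hb
  ext i j
  fin_cases i <;> fin_cases j <;> simp [Matrix.mul_apply, ha.1, ha.2, hb.1, hb.2]

lemma rowSub_mul_colSub : rowSub * colSub = Submodule.span ℂ {(!![1, 0; 0, 0] : M2C)} := by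
  refine le_antisymm (Submodule.mul_le.2 fun a ha b hb ↦ ?_) ?_
  · rw [mul_eq_smul_of_mem_rowSub_of_mem_colSub ha hb]
    exact Submodule.smul_mem _ _ (Submodule.mem_span_singleton_self _)
  · rw [Submodule.span_le, Set.singleton_subset_iff]
    have hrow : (!![1, 0; 0, 0] : M2C) ∈ rowSub := by simp [mem_rowSub]
    have hcol : (!![1, 0; 0, 0] : M2C) ∈ colSub := by simp [mem_colSub]
    simpa [mul_eq_smul_of_mem_rowSub_of_mem_colSub hrow hcol] using
      Submodule.mul_mem_mul hrow hcol

lemma qmul_qmul_rowSub_top_colSub :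
    qmul (qmul rowSub ⊤) colSub = Submodule.span ℂ {(!![1, 0; 0, 0] : M2C)} := by
  rw [qmul_eq_mul, qmul_eq_mul, rowSub_mul_top, rowSub_mul_colSub]

lemma qmul_qmul_rowSub_top_colSub_le_symmSub : qmul (qmul rowSub ⊤) colSub ≤ symmSub := by
  simp [qmul_qmul_rowSub_top_colSub, mem_symmSub]

lemma not_rowSub_le_symmSub : ¬ rowSub ≤ symmSub := fun h ↦ by
  simpa [mem_symmSub] using h (show (!![0, 1; 0, 0] : M2C) ∈ rowSub by simp [mem_rowSub])

lemma not_colSub_le_symmSub : ¬ colSub ≤ symmSub := fun h ↦ by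
  simpa [mem_symmSub] using h (show (!![0, 0; 1, 0] : M2C) ∈ colSub by simp [mem_colSub])

lemma not_isPrimeEl_symmSub : ¬ IsPrimeEl symmSub := fun h ↦
  (h rowSub colSub rowSub.closed_of_finiteDimensional colSub.closed_of_finiteDimensional
    qmul_qmul_rowSub_top_colSub_le_symmSub).elim
    not_rowSub_le_symmSub not_colSub_le_symmSub

lemma sInf_primes_above_symmSub :
    sInf {p : Submodule ℂ M2C | IsClosed (p : Set M2C) ∧ IsPrimeEl p ∧ symmSub ≤ p} = ⊤ :=
  isCoatom_symmSub.sInf_eq_top (fun h ↦ not_isPrimeEl_symmSub h.2.1) fun _ h ↦ h.2.2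

/-- In `Max M₂(ℂ)`, the subspace `P` of symmetric matrices is a maximal proper
linear subspace but not a prime element: `R∘⊤∘L = ℂ·(1 0; 0 0) ≤ P` while `R ≰ P`, `L ≰ P`.
Consequently `P` is not a meet of prime elements and `Max M₂(ℂ)` is not spatial with respect
to irreducible representations. -/
theorem maxM2C_not_spatial :
    (qmul (qmul rowSub ⊤) colSub = Submodule.span ℂ {(!![1, 0; 0, 0] : M2C)} ∧
      qmul (qmul rowSub ⊤) colSub ≤ symmSub ∧
      ¬ rowSub ≤ symmSub ∧ ¬ colSub ≤ symmSub) ∧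
    ¬ IsPrimeEl symmSub ∧
    (symmSub ≠ ⊤ ∧ ∀ M : Submodule ℂ M2C, symmSub < M → M = ⊤) ∧
    symmSub ≠ sInf {p : Submodule ℂ M2C |
        IsClosed (p : Set M2C) ∧ IsPrimeEl p ∧ symmSub ≤ p} ∧
    ¬ (∀ m : Submodule ℂ M2C, IsClosed (m : Set M2C) →
        m = sInf {p : Submodule ℂ M2C |
          IsClosed (p : Set M2C) ∧ IsPrimeEl p ∧ m ≤ p}) := by
  have hsInf := sInf_primes_above_symmSub
  refine ⟨⟨qmul_qmul_rowSub_top_colSub,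
      qmul_qmul_rowSub_top_colSub_le_symmSub,
      not_rowSub_le_symmSub, not_colSub_le_symmSub⟩,
    not_isPrimeEl_symmSub, isCoatom_symmSub, ?_, fun h ↦ ?_⟩
  · exact hsInf ▸ isCoatom_symmSub.1
  · exact isCoatom_symmSub.1 (hsInf ▸ h symmSub symmSub.closed_of_finiteDimensional)
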